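/- With F(ψ) = k/sin²(λψ + ψ₀), G(ψ) = cos(λψ + ψ₀), and I_λ = U^λ G as above, for any nonnegative integer ν the function X_L^ν(I_λ) is also a first integral of H = ½p_r² + (1/r²)(½p_ψ² + F(ψ)). -/

import Mathlib

open Real

/- Phase space coordinates: `x 0 = r`, `x 1 = ψ`, `x 2 = p_r`, `x 3 = p_ψ`. -/

/-- Partial derivative with respect to the `i`-th coordinate. -/
noncomputable def pd (i : Fin 4) (f : (Fin 4 → ℝ) → ℝ) (x : Fin 4 → ℝ) : ℝ :=
  deriv (fun t => f (Function.update x i t)) (x i)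

/-- The angular Hamiltonian `L = ½ p_ψ² + F(ψ)`. -/
noncomputable def Lfun (F : ℝ → ℝ) (x : Fin 4 → ℝ) : ℝ :=
  (1/2) * (x 3)^2 + F (x 1)

/-- The Hamiltonian vector field `X_L = p_ψ ∂/∂ψ − F'(ψ) ∂/∂p_ψ` as an operator. -/
noncomputable def XL (F : ℝ → ℝ) (f : (Fin 4 → ℝ) → ℝ) (x : Fin 4 → ℝ) : ℝ :=
  x 3 * pd 1 f x - deriv F (x 1) * pd 3 f x

/-- The Hamiltonian `H = ½ p_r² + (½ p_ψ² + F(ψ))/r²`. -/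
noncomputable def Hfun (F : ℝ → ℝ) (x : Fin 4 → ℝ) : ℝ :=
  (1/2) * (x 2)^2 + (1 / (x 0)^2) * ((1/2) * (x 3)^2 + F (x 1))

/-- The operator `U = p_r + (μ/r) X_L` (multiplication by `p_r` plus `(μ/r)·X_L`). -/
noncomputable def Uop (μ : ℝ) (F : ℝ → ℝ) (f : (Fin 4 → ℝ) → ℝ) (x : Fin 4 → ℝ) : ℝ :=
  x 2 * f x + (μ / x 0) * XL F f x

/-- The Hamiltonian vector field of `K` applied to `f`. -/
noncomputable def XHam (K f : (Fin 4 → ℝ) → ℝ) (x : Fin 4 → ℝ) : ℝ :=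
  pd 2 K x * pd 0 f x + pd 3 K x * pd 1 f x - pd 0 K x * pd 2 f x - pd 1 K x * pd 3 f x

/-!
Write `θ = λψ + ψ₀` and `σ² = 2L` (`σ` possibly imaginary). On the region `r ≠ 0`, `sin θ ≠ 0` all
functions involved have the form `A cos θ - B p_ψ sin θ = Re ((A + iσB) (cos θ + i p_ψ sin θ / σ))`
with `X_L A = X_L B = 0`. Since `F' = -2λ F cot θ`, the field `X_L` maps `cos θ ↦ -λ p_ψ sin θ` and
`p_ψ sin θ ↦ 2λL cos θ`; as `X_H = p_r ∂_r + (2L/r³) ∂_{p_r} + X_L / r²`, the second factor `Z`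
satisfies `X_H Z = (iσλ/r²) Z`. One application of `U` turns a pair with
`X_H (A + iσB) = -(iσw/r²) (A + iσB)` into one with `w + 1`, so `I_λ = U^λ cos θ` has `w = λ` and
the two phases cancel. Finally `X_L` acts on the form by `(A, B) ↦ (-2λLB, λA)`, which keeps `w`
because `X_H L = 0`.
-/

open Function Filter Topology Set

section PartialDerivatives

variable {f g : (Fin 4 → ℝ) → ℝ} {x : Fin 4 → ℝ}

lemma pd_eq_fderiv (hf : DifferentiableAt ℝ f x) (i : Fin 4) :
    pd i f x = fderiv ℝ f x (Pi.single i 1) := by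
  have hf' : HasFDerivAt f (fderiv ℝ f x) (update x i (x i)) := by
    rw [update_eq_self]; exact hf.hasFDerivAt
  exact (hf'.comp_hasDerivAt (x i) (hasDerivAt_update x i (x i))).deriv

lemma pd_congr (h : f =ᶠ[𝓝 x] g) (i : Fin 4) : pd i f x = pd i g x := by
  have hu : Tendsto (update x i) (𝓝 (x i)) (𝓝 x) := by
    simpa using ((continuous_const (y := x)).update i continuous_id).tendsto (x i)
  exact (h.comp_tendsto hu).deriv_eq

lemma XL_congr {F : ℝ → ℝ} (h : f =ᶠ[𝓝 x] g) : XL F f x = XL F g x := by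
  simp only [XL, pd_congr h]

lemma XHam_congr {K : (Fin 4 → ℝ) → ℝ} (h : f =ᶠ[𝓝 x] g) : XHam K f x = XHam K g x := by
  simp only [XHam, pd_congr h]

lemma Uop_congr {μ : ℝ} {F : ℝ → ℝ} (h : f =ᶠ[𝓝 x] g) : Uop μ F f x = Uop μ F g x := by
  rw [Uop, Uop, XL_congr h, h.eq_of_nhds]

end PartialDerivatives

section DirectionalDerivatives

variable {E : Type*} [NormedAddCommGroup E] [NormedSpace ℝ E]

def IsDirectionalDerivAt (D : (E → ℝ) → E → ℝ) (x : E) : Prop :=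
  ∃ v : E, ∀ f : E → ℝ, DifferentiableAt ℝ f x → D f x = fderiv ℝ f x v

namespace IsDirectionalDerivAt

variable {D : (E → ℝ) → E → ℝ} {x : E} {f g : E → ℝ}

lemma add (hD : IsDirectionalDerivAt D x) (hf : DifferentiableAt ℝ f x)
    (hg : DifferentiableAt ℝ g x) : D (fun y => f y + g y) x = D f x + D g x := by
  obtain ⟨v, hv⟩ := hD
  rw [hv (fun y => f y + g y) (hf.add hg), hv f hf, hv g hg, fderiv_fun_add hf hg, add_apply]

lemma sub (hD : IsDirectionalDerivAt D x) (hf : DifferentiableAt ℝ f x)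
    (hg : DifferentiableAt ℝ g x) : D (fun y => f y - g y) x = D f x - D g x := by
  obtain ⟨v, hv⟩ := hD
  rw [hv (fun y => f y - g y) (hf.sub hg), hv f hf, hv g hg, fderiv_fun_sub hf hg, sub_apply]

lemma mul (hD : IsDirectionalDerivAt D x) (hf : DifferentiableAt ℝ f x)
    (hg : DifferentiableAt ℝ g x) : D (fun y => f y * g y) x = D f x * g x + f x * D g x := by
  obtain ⟨v, hv⟩ := hD
  rw [hv (fun y => f y * g y) (hf.mul hg), hv f hf, hv g hg, fderiv_fun_mul hf hg]
  simp only [add_apply, smul_apply, smul_eq_mul]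
  ring

lemma const (hD : IsDirectionalDerivAt D x) (c : ℝ) : D (fun _ => c) x = 0 := by
  obtain ⟨v, hv⟩ := hD
  rw [hv _ (differentiableAt_const c), fderiv_const_apply, zero_apply]

end IsDirectionalDerivAt

end DirectionalDerivatives

lemma isDirectionalDerivAt_XL (F : ℝ → ℝ) (x : Fin 4 → ℝ) : IsDirectionalDerivAt (XL F) x :=
  ⟨x 3 • Pi.single 1 1 - deriv F (x 1) • Pi.single 3 1, fun f hf => by
    simp only [XL, pd_eq_fderiv hf, map_sub, map_smul, smul_eq_mul]⟩

lemma isDirectionalDerivAt_XHam (K : (Fin 4 → ℝ) → ℝ) (x : Fin 4 → ℝ) :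
    IsDirectionalDerivAt (XHam K) x :=
  ⟨pd 2 K x • Pi.single 0 1 + pd 3 K x • Pi.single 1 1 - pd 0 K x • Pi.single 2 1
      - pd 1 K x • Pi.single 3 1, fun f hf => by
    simp only [XHam, pd_eq_fderiv hf, map_sub, map_add, map_smul, smul_eq_mul]⟩

lemma XHam_Hfun (F : ℝ → ℝ) {x : Fin 4 → ℝ} (hx : x 0 ≠ 0) (f : (Fin 4 → ℝ) → ℝ) :
    XHam (Hfun F) f x
      = x 2 * pd 0 f x + 2 * Lfun F x / x 0 ^ 3 * pd 2 f x + XL F f x / x 0 ^ 2 := by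
  have h0 : pd 0 (Hfun F) x = -2 * Lfun F x / x 0 ^ 3 := by
    have e : (fun t => Hfun F (update x 0 t))
        = fun t => 1 / 2 * x 2 ^ 2 + (t ^ 2)⁻¹ * Lfun F x := by
      ext t; simp [Hfun, Lfun]
    have h := (((hasDerivAt_pow 2 (x 0)).inv (pow_ne_zero 2 hx)).mul_const
      (Lfun F x)).const_add (1 / 2 * x 2 ^ 2)
    rw [pd, e]
    refine h.deriv.trans ?_
    field_simp
    ring
  have h1 : pd 1 (Hfun F) x = deriv F (x 1) / x 0 ^ 2 := by simp [pd, Hfun, div_eq_inv_mul]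
  have h2 : pd 2 (Hfun F) x = x 2 := by simp [pd, Hfun]
  have h3 : pd 3 (Hfun F) x = x 3 / x 0 ^ 2 := by simp [pd, Hfun, div_eq_inv_mul]
  rw [XHam, XL, h0, h1, h2, h3]
  ring

lemma XHam_Hfun_eq_XL_div (F : ℝ → ℝ) {f : (Fin 4 → ℝ) → ℝ} {x : Fin 4 → ℝ} (hx : x 0 ≠ 0)
    (h0 : pd 0 f x = 0) (h2 : pd 2 f x = 0) : XHam (Hfun F) f x = XL F f x / x 0 ^ 2 := by
  rw [XHam_Hfun F hx, h0, h2]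
  ring

section ElementaryBrackets

variable {F : ℝ → ℝ} {x : Fin 4 → ℝ}

lemma differentiableAt_Lfun (hF : DifferentiableAt ℝ F (x 1)) :
    DifferentiableAt ℝ (Lfun F) x := by
  unfold Lfun; fun_prop

lemma XL_Lfun (F : ℝ → ℝ) (x : Fin 4 → ℝ) : XL F (Lfun F) x = 0 := by
  simp [XL, pd, Lfun, mul_comm]

lemma XL_radialMomentum : XL F (fun y => y 2) x = 0 := by simp [XL, pd]

lemma XL_inv_radius : XL F (fun y => (y 0)⁻¹) x = 0 := by simp [XL, pd]

lemma XHam_Hfun_Lfun (hx : x 0 ≠ 0) : XHam (Hfun F) (Lfun F) x = 0 := by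
  simp [XHam_Hfun F hx, XL_Lfun, pd, Lfun]

lemma XHam_Hfun_radialMomentum (hx : x 0 ≠ 0) :
    XHam (Hfun F) (fun y => y 2) x = 2 * Lfun F x / x 0 ^ 3 := by
  simp [XHam_Hfun F hx, XL, pd]

lemma XHam_Hfun_inv_radius (hx : x 0 ≠ 0) :
    XHam (Hfun F) (fun y => (y 0)⁻¹) x = -(x 2 / x 0 ^ 2) := by
  simp [XHam_Hfun F hx, XL, pd, div_eq_mul_inv]

end ElementaryBrackets

structure IsRotatingPair (F : ℝ → ℝ) (R : Set (Fin 4 → ℝ)) (w : ℝ)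
    (A B : (Fin 4 → ℝ) → ℝ) : Prop where
  differentiableAt_fst : ∀ y ∈ R, DifferentiableAt ℝ A y
  differentiableAt_snd : ∀ y ∈ R, DifferentiableAt ℝ B y
  XL_fst : ∀ y ∈ R, XL F A y = 0
  XL_snd : ∀ y ∈ R, XL F B y = 0
  XHam_fst : ∀ y ∈ R, XHam (Hfun F) A y = 2 * w * Lfun F y / y 0 ^ 2 * B y
  XHam_snd : ∀ y ∈ R, XHam (Hfun F) B y = -(w / y 0 ^ 2) * A y

namespace IsRotatingPair

variable {F : ℝ → ℝ} {R : Set (Fin 4 → ℝ)} {w : ℝ} {A B : (Fin 4 → ℝ) → ℝ}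

lemma raise (hR : ∀ y ∈ R, y 0 ≠ 0 ∧ DifferentiableAt ℝ F (y 1))
    (h : IsRotatingPair F R w A B) :
    IsRotatingPair F R (w + 1) (fun y => y 2 * A y - 2 * (Lfun F y * ((y 0)⁻¹ * B y)))
      (fun y => y 2 * B y + (y 0)⁻¹ * A y) := by
  have H (y) (hy : y ∈ R) : y 0 ≠ 0 ∧ DifferentiableAt ℝ (Lfun F) y ∧
      DifferentiableAt ℝ A y ∧ DifferentiableAt ℝ B y :=
    ⟨(hR y hy).1, differentiableAt_Lfun (hR y hy).2, h.differentiableAt_fst y hy,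
      h.differentiableAt_snd y hy⟩
  refine ⟨fun y hy => ?_, fun y hy => ?_, fun y hy => ?_, fun y hy => ?_, fun y hy => ?_,
    fun y hy => ?_⟩ <;> obtain ⟨hy0, hL, hA, hB⟩ := H y hy
  · fun_prop (disch := assumption)
  · fun_prop (disch := assumption)
  · have hD := isDirectionalDerivAt_XL F y
    simp (disch := fun_prop (disch := assumption)) only [hD.sub, hD.mul, hD.const,
      XL_Lfun, XL_radialMomentum, XL_inv_radius, h.XL_fst y hy, h.XL_snd y hy]
    ring
  · have hD := isDirectionalDerivAt_XL F y
    simp (disch := fun_prop (disch := assumption)) only [hD.add, hD.mul,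
      XL_radialMomentum, XL_inv_radius, h.XL_fst y hy, h.XL_snd y hy]
    ring
  · have hD := isDirectionalDerivAt_XHam (Hfun F) y
    simp (disch := fun_prop (disch := assumption)) only [hD.sub, hD.mul, hD.const,
      XHam_Hfun_Lfun hy0, XHam_Hfun_radialMomentum hy0, XHam_Hfun_inv_radius hy0,
      h.XHam_fst y hy, h.XHam_snd y hy]
    field_simp
    ring
  · have hD := isDirectionalDerivAt_XHam (Hfun F) y
    simp (disch := fun_prop (disch := assumption)) only [hD.add, hD.mul,
      XHam_Hfun_radialMomentum hy0, XHam_Hfun_inv_radius hy0,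
      h.XHam_fst y hy, h.XHam_snd y hy]
    field_simp
    ring

lemma rotate (hR : ∀ y ∈ R, y 0 ≠ 0 ∧ DifferentiableAt ℝ F (y 1))
    (h : IsRotatingPair F R w A B) (m : ℝ) :
    IsRotatingPair F R w (fun y => -(2 * m) * (Lfun F y * B y)) (fun y => m * A y) := by
  refine ⟨fun y hy => ?_, fun y hy => ?_, fun y hy => ?_, fun y hy => ?_, fun y hy => ?_,
    fun y hy => ?_⟩
  all_goals have hL := differentiableAt_Lfun (hR y hy).2
  all_goals have hA := h.differentiableAt_fst y hy
  all_goals have hB := h.differentiableAt_snd y hy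
  · fun_prop
  · fun_prop
  · have hD := isDirectionalDerivAt_XL F y
    simp (disch := fun_prop) only [hD.mul, hD.const, XL_Lfun, h.XL_snd y hy]
    ring
  · have hD := isDirectionalDerivAt_XL F y
    simp (disch := fun_prop) only [hD.mul, hD.const, h.XL_fst y hy]
    ring
  · have hD := isDirectionalDerivAt_XHam (Hfun F) y
    simp (disch := fun_prop) only [hD.mul, hD.const, XHam_Hfun_Lfun (hR y hy).1,
      h.XHam_snd y hy]
    ring
  · have hD := isDirectionalDerivAt_XHam (Hfun F) y
    simp (disch := fun_prop) only [hD.mul, hD.const, h.XHam_fst y hy]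
    ring

end IsRotatingPair

section SinPotential

variable {m k ψ₀ : ℝ}

noncomputable def sinPotential (m k ψ₀ ψ : ℝ) : ℝ := k / sin (m * ψ + ψ₀) ^ 2

def regularSet (m ψ₀ : ℝ) : Set (Fin 4 → ℝ) := {y | y 0 ≠ 0 ∧ sin (m * y 1 + ψ₀) ≠ 0}

noncomputable def angularForm (m ψ₀ : ℝ) (A B : (Fin 4 → ℝ) → ℝ) (y : Fin 4 → ℝ) : ℝ :=
  A y * cos (m * y 1 + ψ₀) - B y * (y 3 * sin (m * y 1 + ψ₀))

lemma hasDerivAt_phase (m ψ₀ ψ : ℝ) : HasDerivAt (fun t => m * t + ψ₀) m ψ := by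
  simpa using ((hasDerivAt_id ψ).const_mul m).add_const ψ₀

lemma hasDerivAt_sinPotential {ψ : ℝ} (h : sin (m * ψ + ψ₀) ≠ 0) :
    HasDerivAt (sinPotential m k ψ₀)
      (-2 * m * cos (m * ψ + ψ₀) / sin (m * ψ + ψ₀) * sinPotential m k ψ₀ ψ) ψ := by
  have h2 := (hasDerivAt_phase m ψ₀ ψ).sin.pow 2
  refine ((hasDerivAt_const ψ k).div h2 (pow_ne_zero 2 h)).congr_deriv ?_
  simp only [sinPotential, Pi.pow_apply]
  field_simp
  ring

lemma isOpen_regularSet : IsOpen (regularSet m ψ₀) :=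
  (isOpen_ne_fun (continuous_apply 0) continuous_const).inter
    (isOpen_ne_fun (by fun_prop) continuous_const)

lemma regular_of_mem_regularSet (m k ψ₀ : ℝ) :
    ∀ y ∈ regularSet m ψ₀, y 0 ≠ 0 ∧ DifferentiableAt ℝ (sinPotential m k ψ₀) (y 1) :=
  fun _ hy => ⟨hy.1, (hasDerivAt_sinPotential hy.2).differentiableAt⟩

lemma XL_cos (F : ℝ → ℝ) (x : Fin 4 → ℝ) :
    XL F (fun y => cos (m * y 1 + ψ₀)) x = -(m * (x 3 * sin (m * x 1 + ψ₀))) := by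
  have h1 : pd 1 (fun y => cos (m * y 1 + ψ₀)) x = -sin (m * x 1 + ψ₀) * m := by
    simpa [pd] using (hasDerivAt_phase m ψ₀ (x 1)).cos.deriv
  have h3 : pd 3 (fun y => cos (m * y 1 + ψ₀)) x = 0 := by simp [pd]
  rw [XL, h1, h3]
  ring

lemma XL_mul_sin {x : Fin 4 → ℝ} (hx : sin (m * x 1 + ψ₀) ≠ 0) :
    XL (sinPotential m k ψ₀) (fun y => y 3 * sin (m * y 1 + ψ₀)) x
      = 2 * m * Lfun (sinPotential m k ψ₀) x * cos (m * x 1 + ψ₀) := by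
  have h1 : pd 1 (fun y => y 3 * sin (m * y 1 + ψ₀)) x = x 3 * (cos (m * x 1 + ψ₀) * m) := by
    simpa [pd] using ((hasDerivAt_phase m ψ₀ (x 1)).sin.const_mul (x 3)).deriv
  have h3 : pd 3 (fun y => y 3 * sin (m * y 1 + ψ₀)) x = sin (m * x 1 + ψ₀) := by simp [pd]
  rw [XL, h1, h3, (hasDerivAt_sinPotential hx).deriv, Lfun]
  field_simp
  ring

lemma XHam_Hfun_cos (F : ℝ → ℝ) {x : Fin 4 → ℝ} (hx : x 0 ≠ 0) :
    XHam (Hfun F) (fun y => cos (m * y 1 + ψ₀)) x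
      = -(m / x 0 ^ 2 * (x 3 * sin (m * x 1 + ψ₀))) := by
  rw [XHam_Hfun_eq_XL_div F hx (by simp [pd]) (by simp [pd]), XL_cos]
  ring

lemma XHam_Hfun_mul_sin {x : Fin 4 → ℝ} (hx : x ∈ regularSet m ψ₀) :
    XHam (Hfun (sinPotential m k ψ₀)) (fun y => y 3 * sin (m * y 1 + ψ₀)) x
      = 2 * m * Lfun (sinPotential m k ψ₀) x / x 0 ^ 2 * cos (m * x 1 + ψ₀) := by
  rw [XHam_Hfun_eq_XL_div _ hx.1 (by simp [pd]) (by simp [pd]), XL_mul_sin hx.2]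
  ring

end SinPotential

section AngularForm

variable {m k ψ₀ : ℝ} {A B : (Fin 4 → ℝ) → ℝ} {y : Fin 4 → ℝ}

lemma XL_angularForm (hy : y ∈ regularSet m ψ₀) (hA : DifferentiableAt ℝ A y)
    (hB : DifferentiableAt ℝ B y) (hA₀ : XL (sinPotential m k ψ₀) A y = 0)
    (hB₀ : XL (sinPotential m k ψ₀) B y = 0) :
    XL (sinPotential m k ψ₀) (angularForm m ψ₀ A B) y
      = angularForm m ψ₀ (fun y => -(2 * m) * (Lfun (sinPotential m k ψ₀) y * B y))
          (fun y => m * A y) y := by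
  have hD := isDirectionalDerivAt_XL (sinPotential m k ψ₀) y
  have hc : DifferentiableAt ℝ (fun y => cos (m * y 1 + ψ₀)) y := by fun_prop
  have hs : DifferentiableAt ℝ (fun y => y 3 * sin (m * y 1 + ψ₀)) y := by fun_prop
  unfold angularForm
  rw [hD.sub (hA.fun_mul hc) (hB.fun_mul hs), hD.mul hA hc, hD.mul hB hs, XL_cos,
    XL_mul_sin hy.2, hA₀, hB₀]
  ring

lemma Uop_angularForm (hm : m ≠ 0) (hy : y ∈ regularSet m ψ₀) (hA : DifferentiableAt ℝ A y)
    (hB : DifferentiableAt ℝ B y) (hA₀ : XL (sinPotential m k ψ₀) A y = 0)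
    (hB₀ : XL (sinPotential m k ψ₀) B y = 0) :
    Uop (1 / m) (sinPotential m k ψ₀) (angularForm m ψ₀ A B) y
      = angularForm m ψ₀
          (fun y => y 2 * A y - 2 * (Lfun (sinPotential m k ψ₀) y * ((y 0)⁻¹ * B y)))
          (fun y => y 2 * B y + (y 0)⁻¹ * A y) y := by
  rw [Uop, XL_angularForm hy hA hB hA₀ hB₀]
  simp only [angularForm]
  field_simp
  ring

lemma IsRotatingPair.XHam_angularForm
    (h : IsRotatingPair (sinPotential m k ψ₀) (regularSet m ψ₀) m A B)
    (hy : y ∈ regularSet m ψ₀) :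
    XHam (Hfun (sinPotential m k ψ₀)) (angularForm m ψ₀ A B) y = 0 := by
  have hD := isDirectionalDerivAt_XHam (Hfun (sinPotential m k ψ₀)) y
  have hA := h.differentiableAt_fst y hy
  have hB := h.differentiableAt_snd y hy
  have hc : DifferentiableAt ℝ (fun y => cos (m * y 1 + ψ₀)) y := by fun_prop
  have hs : DifferentiableAt ℝ (fun y => y 3 * sin (m * y 1 + ψ₀)) y := by fun_prop
  unfold angularForm
  rw [hD.sub (hA.fun_mul hc) (hB.fun_mul hs), hD.mul hA hc, hD.mul hB hs, h.XHam_fst y hy,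
    h.XHam_snd y hy, XHam_Hfun_cos _ hy.1, XHam_Hfun_mul_sin hy]
  field_simp
  ring

end AngularForm

noncomputable def raisedCoeffs (F : ℝ → ℝ) : ℕ → ((Fin 4 → ℝ) → ℝ) × ((Fin 4 → ℝ) → ℝ)
  | 0 => (fun _ => 1, fun _ => 0)
  | n + 1 =>
    (fun y => y 2 * (raisedCoeffs F n).1 y
        - 2 * (Lfun F y * ((y 0)⁻¹ * (raisedCoeffs F n).2 y)),
      fun y => y 2 * (raisedCoeffs F n).2 y + (y 0)⁻¹ * (raisedCoeffs F n).1 y)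

lemma isRotatingPair_raisedCoeffs {F : ℝ → ℝ} {R : Set (Fin 4 → ℝ)}
    (hR : ∀ y ∈ R, y 0 ≠ 0 ∧ DifferentiableAt ℝ F (y 1)) (n : ℕ) :
    IsRotatingPair F R n (raisedCoeffs F n).1 (raisedCoeffs F n).2 := by
  induction n with
  | zero =>
    refine ⟨fun _ _ => ?_, fun _ _ => ?_, fun _ _ => ?_, fun _ _ => ?_, fun _ _ => ?_,
      fun _ _ => ?_⟩ <;> simp [raisedCoeffs, XL, XHam, pd]
  | succ n ih => exact_mod_cast ih.raise hR

section Iterates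

variable {m k ψ₀ : ℝ}

lemma eqOn_iterate_Uop (hm : m ≠ 0) (n : ℕ) :
    EqOn ((Uop (1 / m) (sinPotential m k ψ₀))^[n] (fun y => cos (m * y 1 + ψ₀)))
      (angularForm m ψ₀ (raisedCoeffs (sinPotential m k ψ₀) n).1
        (raisedCoeffs (sinPotential m k ψ₀) n).2) (regularSet m ψ₀) := by
  induction n with
  | zero => intro y _; simp [angularForm, raisedCoeffs]
  | succ n ih =>
    intro y hy
    have h := isRotatingPair_raisedCoeffs (regular_of_mem_regularSet m k ψ₀) n
    rw [iterate_succ_apply', Uop_congr (ih.eventuallyEq_of_mem (isOpen_regularSet.mem_nhds hy))]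
    exact Uop_angularForm hm hy (h.differentiableAt_fst y hy) (h.differentiableAt_snd y hy)
      (h.XL_fst y hy) (h.XL_snd y hy)

lemma exists_eqOn_iterate_XL {w : ℝ} {A B : (Fin 4 → ℝ) → ℝ} {f : (Fin 4 → ℝ) → ℝ}
    (h : IsRotatingPair (sinPotential m k ψ₀) (regularSet m ψ₀) w A B)
    (hf : EqOn f (angularForm m ψ₀ A B) (regularSet m ψ₀)) (j : ℕ) :
    ∃ A' B', IsRotatingPair (sinPotential m k ψ₀) (regularSet m ψ₀) w A' B' ∧
      EqOn ((XL (sinPotential m k ψ₀))^[j] f) (angularForm m ψ₀ A' B') (regularSet m ψ₀) := by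
  induction j with
  | zero => exact ⟨A, B, h, hf⟩
  | succ j ih =>
    obtain ⟨A', B', h', hf'⟩ := ih
    refine ⟨_, _, h'.rotate (regular_of_mem_regularSet m k ψ₀) m, fun y hy => ?_⟩
    rw [iterate_succ_apply', XL_congr (hf'.eventuallyEq_of_mem (isOpen_regularSet.mem_nhds hy))]
    exact XL_angularForm hy (h'.differentiableAt_fst y hy) (h'.differentiableAt_snd y hy)
      (h'.XL_fst y hy) (h'.XL_snd y hy)

end Iterates

/-- With `F(ψ) = k/sin²(λψ+ψ₀)`, `G(ψ) = cos(λψ+ψ₀)` and `I_λ = U^λ G`, for any `ν ∈ ℕ`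
the function `X_L^ν(I_λ)` is also a first integral of `H = ½p_r² + (1/r²)(½p_ψ² + F)`. -/
theorem XL_power_of_integral (lam : ℕ) (hlam : 0 < lam) (ν : ℕ) (k ψ₀ : ℝ)
    (x : Fin 4 → ℝ) (hr : 0 < x 0) (hs : sin (lam * x 1 + ψ₀) ≠ 0) :
    XHam (Hfun (fun ψ => k / (sin (lam * ψ + ψ₀))^2))
      ((XL (fun ψ => k / (sin (lam * ψ + ψ₀))^2))^[ν]
        ((Uop (1 / lam) (fun ψ => k / (sin (lam * ψ + ψ₀))^2))^[lam]
          (fun y => cos (lam * y 1 + ψ₀)))) x = 0 := by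
  have hx : x ∈ regularSet lam ψ₀ := ⟨hr.ne', hs⟩
  obtain ⟨A, B, hAB, hEq⟩ := exists_eqOn_iterate_XL
    (isRotatingPair_raisedCoeffs (regular_of_mem_regularSet lam k ψ₀) lam)
    (eqOn_iterate_Uop (Nat.cast_ne_zero.mpr hlam.ne') lam) ν
  exact (XHam_congr (hEq.eventuallyEq_of_mem (isOpen_regularSet.mem_nhds hx))).trans
    (hAB.XHam_angularForm hx)
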